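/- arXiv:1008.4100 — 4 statements merged into one kernel-verified Lean document; each statement's English description precedes it below -/
import Mathlib

section
/- Let T be a finite set of even cardinality with a fixed-point-free involution, and halfspaces T_e^+ (e ∈ E) as above, each of cardinality |T|/2. A k-subset K of T (with 1 ≤ k ≤ |T| - 1) is a committee if and only if K is a blocking set for the family consisting of all ⌊(|T| - k + 1)/2⌋-subsets of T_e^+, taken over all e ∈ E; that is, K intersects every ⌊(|T|-k+1)/2⌋-subset of every positive halfspace. -/
/-!
The involution maps each halfspace bijectively onto its complement, so every halfspace has
exactly `|T| / 2` elements. A set `K` meets every `t`-subset of `P` exactly when fewer than `t`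
elements of `P` lie outside `K`; for `P = T_e^+` and `t = ⌊(|T| - k + 1) / 2⌋` this says
`|T| / 2 - |K ∩ T_e^+| < ⌊(|T| - k + 1) / 2⌋`, which is `k < 2 |K ∩ T_e^+|` for even `|T|`.
-/

open Finset

section

variable {α : Type*} [DecidableEq α]

theorem Finset.forall_subset_card_eq_inter_nonempty_iff (K P : Finset α) (t : ℕ) :
    (∀ S ⊆ P, #S = t → (K ∩ S).Nonempty) ↔ #(P \ K) < t := by
  constructor
  · intro hblock
    by_contra! hle
    obtain ⟨S, hSsub, hScard⟩ := exists_subset_card_eq hle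
    obtain ⟨x, hx⟩ := hblock S (hSsub.trans sdiff_subset) hScard
    obtain ⟨hxK, hxS⟩ := mem_inter.1 hx
    exact (mem_sdiff.1 (hSsub hxS)).2 hxK
  · intro hlt S hSP hScard
    by_contra hempty
    have hdisj : Disjoint K S := disjoint_iff_inter_eq_empty.2 (not_nonempty_iff_eq_empty.1 hempty)
    have hsub : S ⊆ P \ K := subset_sdiff.2 ⟨hSP, hdisj.symm⟩
    have := card_le_card hsub
    omega

theorem Finset.two_mul_card_eq_card_of_mem_iff_notMem [Fintype α] {neg : α → α}
    (hinv : Function.Involutive neg) {P : Finset α} (hP : ∀ x, x ∈ P ↔ neg x ∉ P) :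
    2 * #P = Fintype.card α := by
  have hcompl : Pᶜ = P.image neg := by
    ext x
    rw [mem_compl, mem_image]
    constructor
    · intro hx
      exact ⟨neg x, by rwa [hP, hinv], hinv x⟩
    · rintro ⟨y, hy, rfl⟩
      exact (hP y).1 hy
  have hcard := card_compl P
  rw [hcompl, card_image_of_injective _ hinv.injective] at hcard
  have := P.card_le_univ
  omega

end

theorem stmt4_general {α E : Type*} [Fintype α] [DecidableEq α]
    (neg : α → α) (hinv : ∀ x, neg (neg x) = x)
    (P : E → Finset α) (hP : ∀ e x, x ∈ P e ↔ neg x ∉ P e)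
    (k : ℕ)
    (K : Finset α) (hK : K.card = k) :
    (∀ e : E, k < 2 * (K ∩ P e).card) ↔
      (∀ e : E, ∀ S : Finset α, S ⊆ P e →
        S.card = (Fintype.card α - k + 1) / 2 → (K ∩ S).Nonempty) := by
  refine forall_congr' fun e => ?_
  rw [forall_subset_card_eq_inter_nonempty_iff]
  have hhalf := two_mul_card_eq_card_of_mem_iff_notMem hinv (hP e)
  have hsplit : #(P e \ K) + #(K ∩ P e) = #(P e) := by
    rw [inter_comm]
    exact card_sdiff_add_card_inter _ _
  have := K.card_le_univ
  omega

/-- a `k`-subset `K` (with `1 ≤ k ≤ |T| - 1`) is a committee iff it is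
a blocking set for the family of all `⌊(|T|-k+1)/2⌋`-subsets of the positive
halfspaces: `K` meets every `⌊(|T|-k+1)/2⌋`-subset of every `P e`. -/
theorem stmt4 {α E : Type*} [Fintype α] [DecidableEq α] [Nonempty E]
    (neg : α → α) (hinv : ∀ x, neg (neg x) = x) (hfpf : ∀ x, neg x ≠ x)
    (P : E → Finset α) (hP : ∀ e x, x ∈ P e ↔ neg x ∉ P e)
    (k : ℕ) (hk1 : 1 ≤ k) (hk2 : k ≤ Fintype.card α - 1)
    (K : Finset α) (hK : K.card = k) :
    (∀ e : E, k < 2 * (K ∩ P e).card) ↔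
      (∀ e : E, ∀ S : Finset α, S ⊆ P e →
        S.card = (Fintype.card α - k + 1) / 2 → (K ∩ S).Nonempty) :=
  stmt4_general neg hinv P hP k K hK
end

section
/- Let n, k be positive integers with k ≤ n, let r be a rational with 0 ≤ r < 1, and let Λ be a nonempty antichain of subsets of an n-set S such that every λ ∈ Λ satisfies |λ| ≥ ⌊rk⌋ + 1 and n - |λ| ≥ k - ⌊rk⌋. Define I_{r,k} = { b ⊆ S : |b| = k and |b ∩ λ| > r·k for all λ ∈ Λ }. Then |I_{r,k}| = C(n,k) + Σ_{D} (-1)^{|D|} · C(n - |∪D|, n - k), where the sum is over all nonempty families D of (k - ⌊rk⌋)-subsets of S each of which is contained in the complement of some λ ∈ Λ. -/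
/-! A `k`-set `b` has `r k < |b ∩ λ|` iff `⌊r k⌋ = m < |b ∩ λ|`, iff `|b \ λ| < k - m`, iff `b`
contains no `(k - m)`-subset of `S \ λ`. So `I_{r,k}` consists of the `k`-sets containing no member
of the family `T` of such sets, and inclusion–exclusion over the subfamilies `D ⊆ T` counts them:
exactly `C(n - |⋃ D|, k - |⋃ D|) = C(n - |⋃ D|, n - k)` of the `k`-sets contain `⋃ D`, and `D = ∅`
contributes `C(n, k)`. -/

open Finset

theorem lt_natCast_iff_of_natCast_eq_floor {R : Type*} [Ring R] [LinearOrder R] [FloorRing R]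
    {x : R} {m j : ℕ} (hm : (m : ℤ) = ⌊x⌋) :
    x < j ↔ m < j := by
  rw [← Int.cast_natCast (R := R), ← Int.floor_lt, ← hm, Nat.cast_lt]

namespace Finset

variable {α : Type*} [DecidableEq α]

theorem lt_card_inter_iff_card_sdiff_lt (s t : Finset α) (m : ℕ) :
    m < #(s ∩ t) ↔ #(s \ t) < #s - m := by
  have := card_inter_add_card_sdiff s t
  omega

theorem lt_card_inter_iff_forall_subset_sdiff (s t : Finset α) (m : ℕ) :
    m < #(s ∩ t) ↔ ∀ d ⊆ s \ t, #d ≠ #s - m := by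
  rw [lt_card_inter_iff_card_sdiff_lt]
  refine ⟨fun h d hd hcard => ?_, fun h => ?_⟩
  · exact (card_le_card hd).not_gt (hcard ▸ h)
  · by_contra! hle
    obtain ⟨d, hd, hcard⟩ := exists_subset_card_eq hle
    exact h d hd hcard

theorem card_filter_forall_not_subset [Fintype α] (U T : Finset (Finset α)) :
    (#(U.filter fun b => ∀ d ∈ T, ¬ d ⊆ b) : ℤ) =
      ∑ D ∈ T.powerset, (-1 : ℤ) ^ #D * #(U.filter fun b => D.sup id ⊆ b) := by
  have key := inclusion_exclusion_sum_inf_compl T (fun d => univ.filter (d ⊆ ·))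
    (fun b => if b ∈ U then (1 : ℤ) else 0)
  have h_avoid :
      (T.inf fun d => (univ.filter (d ⊆ ·))ᶜ) = univ.filter fun b => ∀ d ∈ T, ¬ d ⊆ b := by
    ext b; simp [mem_inf]
  have h_contain (D : Finset (Finset α)) :
      D.inf (fun d => univ.filter (d ⊆ ·)) = univ.filter fun b => D.sup id ⊆ b := by
    ext b; simp [mem_inf]
  have h_restrict (p : Finset α → Prop) [DecidablePred p] :
      (univ.filter fun b => p b ∧ b ∈ U) = U.filter p := by
    ext; simp [and_comm]
  simp only [h_avoid, h_contain, sum_boole, smul_eq_mul, filter_filter] at key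
  simpa only [h_restrict] using key

theorem card_filter_superset_powersetCard_univ [Fintype α] (s : Finset α) {k : ℕ}
    (hk : k ≤ Fintype.card α) :
    #((univ.powersetCard k).filter (s ⊆ ·)) =
      (Fintype.card α - #s).choose (Fintype.card α - k) := by
  have hs := card_le_univ s
  by_cases hsk : #s ≤ k
  · rw [card_filter_powersetCard_subset s univ k (subset_univ s) hsk, card_univ,
      ← Nat.choose_symm (by omega)]
    congr 1
    omega
  · rw [Nat.choose_eq_zero_of_lt (by omega), card_eq_zero, filter_eq_empty_iff]
    intro b hb hsb
    rw [mem_powersetCard_univ] at hb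
    have := card_le_card hsb
    omega

end Finset

theorem stmt5_general {α : Type*} [Fintype α] [DecidableEq α]
    (n k : ℕ) (hn : n = Fintype.card α) (hkn : k ≤ n)
    (r : ℚ)
    (Λ : Finset (Finset α))
    (m : ℕ) (hm : (m : ℤ) = ⌊r * (k : ℚ)⌋) :
    ((((univ : Finset α).powersetCard k).filter
        (fun b => ∀ l ∈ Λ, (r * (k : ℚ) < ((b ∩ l).card : ℚ)))).card : ℤ) =
      (Nat.choose n k : ℤ) +
        ∑ D ∈ ((((univ : Finset α).powersetCard (k - m)).filter
            (fun d => ∃ l ∈ Λ, d ⊆ (univ : Finset α) \ l)).powerset.filter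
              (fun D => D.Nonempty)),
          (-1 : ℤ) ^ D.card * Nat.choose (n - (D.sup id).card) (n - k) := by
  subst hn
  set T := ((univ : Finset α).powersetCard (k - m)).filter fun d => ∃ l ∈ Λ, d ⊆ univ \ l
  have h_blocking : ∀ b ∈ univ.powersetCard k,
      (∀ l ∈ Λ, r * k < (#(b ∩ l) : ℚ)) ↔ ∀ d ∈ T, ¬ d ⊆ b := by
    intro b hb
    rw [mem_powersetCard_univ] at hb
    simp only [lt_natCast_iff_of_natCast_eq_floor hm, lt_card_inter_iff_forall_subset_sdiff, hb,
      T, mem_filter, mem_powersetCard_univ, subset_sdiff, subset_univ, true_and]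
    exact ⟨fun h d ⟨hd, l, hl, hdl⟩ hdb => h l hl d ⟨hdb, hdl⟩ hd,
      fun h l hl d ⟨hdb, hdl⟩ hd => h d ⟨hd, l, hl, hdl⟩ hdb⟩
  have h_nonempty : T.powerset.filter (·.Nonempty) = T.powerset.erase ∅ := by
    ext D; simp [nonempty_iff_ne_empty, and_comm]
  rw [filter_congr h_blocking, card_filter_forall_not_subset, h_nonempty,
    ← add_sum_erase _ _ (empty_mem_powerset T)]
  simp only [card_filter_superset_powersetCard_univ _ hkn, card_empty, pow_zero, one_mul,
    sup_empty, bot_eq_empty, Nat.sub_zero, Nat.choose_symm hkn]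

/-- inclusion–exclusion for relatively `r`-blocking `k`-sets, via the
order ideal generated by the complements of the antichain `Λ`. -/
theorem stmt5 {α : Type*} [Fintype α] [DecidableEq α]
    (n k : ℕ) (hn : n = Fintype.card α) (hk1 : 1 ≤ k) (hkn : k ≤ n)
    (r : ℚ) (hr0 : 0 ≤ r) (hr1 : r < 1)
    (Λ : Finset (Finset α)) (hΛne : Λ.Nonempty)
    (hanti : IsAntichain (· ⊆ ·) (Λ : Set (Finset α)))
    (m : ℕ) (hm : (m : ℤ) = ⌊r * (k : ℚ)⌋)
    (hΛ : ∀ l ∈ Λ, m + 1 ≤ l.card ∧ k - m ≤ n - l.card) :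
    ((((univ : Finset α).powersetCard k).filter
        (fun b => ∀ l ∈ Λ, (r * (k : ℚ) < ((b ∩ l).card : ℚ)))).card : ℤ) =
      (Nat.choose n k : ℤ) +
        ∑ D ∈ ((((univ : Finset α).powersetCard (k - m)).filter
            (fun d => ∃ l ∈ Λ, d ⊆ (univ : Finset α) \ l)).powerset.filter
              (fun D => D.Nonempty)),
          (-1 : ℤ) ^ D.card * Nat.choose (n - (D.sup id).card) (n - k) :=
  stmt5_general n k hn hkn r Λ m hm
end

section
/- Let n, k be positive integers with k ≤ n, r rational with 0 ≤ r < 1, and Λ a nonempty antichain of subsets of an n-set S with every λ ∈ Λ satisfying ⌊rk⌋ + 1 ≤ |λ| ≤ n + ⌊rk⌋ - k. Let M be the family of inclusion-minimal sets among all (|λ| - ⌊rk⌋)-subsets of λ over all λ ∈ Λ. Then |{ b ⊆ S : |b| = k, |b ∩ λ| > rk for all λ ∈ Λ }| = C(n,k) + Σ_{∅ ≠ D ⊆ M} (-1)^{|D|} C(n - |∪D|, k). -/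
/-!
A `k`-set `b` meets `λ` in more than `⌊rk⌋ = m` points iff it meets every `(|λ| - m)`-subset
of `λ`, and since meeting `b` is an upward-closed property it suffices to test the
inclusion-minimal such subsets, i.e. the members of `M`. Inclusion–exclusion over `M`, with the
`k`-sets avoiding `∪D` counted by `C(n - |∪D|, k)`, gives the formula; `D = ∅` contributes
`C(n, k)`.
-/

open Finset

lemma forall_imp_minimal_iff_forall {β : Type*} [PartialOrder β] [WellFoundedLT β] {s : Set β}
    {P : β → Prop} (hP : Monotone P) :
    (∀ x ∈ s, (∀ y ∈ s, y ≤ x → y = x) → P x) ↔ ∀ x ∈ s, P x := by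
  refine ⟨fun h x hx => ?_, fun h x hx _ => h x hx⟩
  obtain ⟨y, hyx, hys, hmin⟩ := exists_minimal_le_of_wellFoundedLT (· ∈ s) x hx
  exact hP hyx (h y hys fun z hz hzy => le_antisymm hzy (hmin hz hzy))

section
variable {α : Type*} [DecidableEq α]

lemma lt_card_inter_iff_forall_powersetCard_not_disjoint {l b : Finset α} {m : ℕ} :
    m < #(b ∩ l) ↔ ∀ θ ∈ l.powersetCard (#l - m), ¬Disjoint θ b := by
  constructor
  · rintro hm θ hθ hdisj
    rw [mem_powersetCard] at hθ
    have hsub : b ∩ l ⊆ l \ θ := fun x hx =>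
      mem_sdiff.2 ⟨(mem_inter.1 hx).2, fun hxθ => disjoint_left.1 hdisj hxθ (mem_inter.1 hx).1⟩
    have := card_le_card hsub
    rw [card_sdiff_of_subset hθ.1, hθ.2] at this
    omega
  · intro h
    by_contra! hle
    have hcard : #l - m ≤ #(l \ b) := by
      have := card_inter_add_card_sdiff l b
      rw [inter_comm] at hle
      omega
    obtain ⟨θ, hθ, hθcard⟩ := exists_subset_card_eq hcard
    exact h θ (mem_powersetCard.2 ⟨hθ.trans sdiff_subset, hθcard⟩)
      (disjoint_of_subset_left hθ sdiff_disjoint)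

variable [Fintype α]

lemma card_filter_disjoint_powersetCard (T : Finset α) (k : ℕ) :
    #{b ∈ powersetCard k (univ : Finset α) | Disjoint T b} = (Fintype.card α - #T).choose k := by
  rw [← card_compl, ← card_powersetCard]
  congr 1
  ext b
  simp [← subset_compl_iff_disjoint_left, and_comm]

lemma card_filter_forall_not_disjoint_powersetCard_eq_sum (M : Finset (Finset α)) (k : ℕ) :
    (#{b ∈ powersetCard k (univ : Finset α) | ∀ θ ∈ M, ¬Disjoint θ b} : ℤ) =
      ∑ D ∈ M.powerset, (-1) ^ #D * ((Fintype.card α - #(D.sup id)).choose k : ℤ) := by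
  have hie := inclusion_exclusion_sum_inf_compl M (fun θ => {b : Finset α | Disjoint θ b})
    (fun b => if #b = k then (1 : ℤ) else 0)
  have hinf : ∀ D : Finset (Finset α),
      #{b ∈ D.inf (fun θ => ({b | Disjoint θ b} : Finset (Finset α))) | #b = k} =
        (Fintype.card α - #(D.sup id)).choose k := fun D => by
    rw [← card_filter_disjoint_powersetCard]
    congr 1
    ext b
    simp [Finset.mem_inf, Finset.disjoint_sup_left, and_comm]
  simp only [sum_boole, compl_filter, smul_eq_mul, hinf] at hie
  rw [← hie]
  congr 2
  ext b
  simp [Finset.mem_inf, and_comm]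
end

theorem stmt7_general {α : Type*} [Fintype α] [DecidableEq α]
    (n k : ℕ) (hn : n = Fintype.card α)
    (r : ℚ)
    (Λ : Finset (Finset α))
    (m : ℕ) (hm : (m : ℤ) = ⌊r * (k : ℚ)⌋)
    (F M : Finset (Finset α))
    (hF : F = Λ.biUnion (fun l => l.powersetCard (l.card - m)))
    (hM : M = F.filter (fun θ => ∀ θ' ∈ F, θ' ⊆ θ → θ' = θ)) :
    ((((univ : Finset α).powersetCard k).filter
        (fun b => ∀ l ∈ Λ, (r * (k : ℚ) < ((b ∩ l).card : ℚ)))).card : ℤ) =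
      (Nat.choose n k : ℤ) +
        ∑ D ∈ M.powerset.filter (fun D => D.Nonempty),
          (-1 : ℤ) ^ D.card * Nat.choose (n - (D.sup id).card) k := by
  have hrk : ∀ c : ℕ, r * k < c ↔ m < c := fun c => by
    rw [← Int.cast_natCast c, ← Int.floor_lt, ← hm, Nat.cast_lt]
  have hgood : ∀ b : Finset α, (∀ l ∈ Λ, r * k < (#(b ∩ l) : ℚ)) ↔ ∀ θ ∈ M, ¬Disjoint θ b :=
    fun b => by
      have hmono : Monotone fun θ : Finset α => ¬Disjoint θ b :=
        fun s t hst h hd => h (hd.mono_left hst)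
      simp only [hM, mem_filter, and_imp]
      refine Iff.trans ?_ (forall_imp_minimal_iff_forall (s := (F : Set (Finset α))) hmono).symm
      simp only [mem_coe, hF, mem_biUnion, forall_exists_index, and_imp, hrk,
        lt_card_inter_iff_forall_powersetCard_not_disjoint]
      exact ⟨fun h θ l hl hθ => h l hl θ hθ, fun h l hl θ hθ => h θ l hl hθ⟩
  have hempty : M.powerset.filter (fun D => ¬D.Nonempty) = {∅} := by
    ext D
    simp +contextual [not_nonempty_iff_eq_empty]
  rw [filter_congr fun b _ => hgood b, card_filter_forall_not_disjoint_powersetCard_eq_sum, ← hn,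
    ← sum_filter_not_add_sum_filter _ (·.Nonempty), hempty]
  simp

/-- inclusion–exclusion for relatively `r`-blocking `k`-sets via the
inclusion-minimal sets among the `(|λ| - ⌊rk⌋)`-subsets of the members of `Λ`. -/
theorem stmt7 {α : Type*} [Fintype α] [DecidableEq α]
    (n k : ℕ) (hn : n = Fintype.card α) (hk1 : 1 ≤ k) (hkn : k ≤ n)
    (r : ℚ) (hr0 : 0 ≤ r) (hr1 : r < 1)
    (Λ : Finset (Finset α)) (hΛne : Λ.Nonempty)
    (hanti : IsAntichain (· ⊆ ·) (Λ : Set (Finset α)))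
    (m : ℕ) (hm : (m : ℤ) = ⌊r * (k : ℚ)⌋)
    (hΛ : ∀ l ∈ Λ, m + 1 ≤ l.card ∧ l.card ≤ n + m - k)
    (F M : Finset (Finset α))
    (hF : F = Λ.biUnion (fun l => l.powersetCard (l.card - m)))
    (hM : M = F.filter (fun θ => ∀ θ' ∈ F, θ' ⊆ θ → θ' = θ)) :
    ((((univ : Finset α).powersetCard k).filter
        (fun b => ∀ l ∈ Λ, (r * (k : ℚ) < ((b ∩ l).card : ℚ)))).card : ℤ) =
      (Nat.choose n k : ℤ) +
        ∑ D ∈ M.powerset.filter (fun D => D.Nonempty),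
          (-1 : ℤ) ^ D.card * Nat.choose (n - (D.sup id).card) k :=
  stmt7_general n k hn r Λ m hm F M hF hM
end

section
/- Let Λ be a finite family of subsets of a finite index set, let D be a finite family of sets, and suppose each member of D is contained in some member of Λ. Define, for C ⊆ Λ, the predicate 'D ⊆ I(C)' to mean every d ∈ D is contained in some member of C. Let Γ be the family of inclusion-minimal sets among { {i : d ⊆ λ_i} : d ∈ D } where Λ = {λ_1, ..., λ_t}, and let Δ* be the simplicial complex on {1,...,t} whose faces are the complements in {1,...,t} of blocking sets of Γ (equivalently, facets of Δ* are complements of the minimal blocking sets of Γ). Then Σ_{C ⊆ Λ, D ⊆ I(C)} (-1)^{|C|} = (-1)^{t-1} · χ̃(Δ*), where χ̃ denotes the reduced Euler characteristic χ̃(Δ) = Σ_{F ∈ Δ, F ≠ ∅} (-1)^{|F|-1} − 1 computed with the empty face counted. -/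
/-!
An index set `C` covers `D` exactly when it meets every `N d = {i | d ⊆ λ_i}`, and meeting every
member of a finite family is the same as meeting its inclusion-minimal members, so the covering
sets are precisely the blocking sets of `Γ`. Complementation `C ↦ [t] \ C` maps them bijectively
onto the faces of `Δ*`, and for `t ≥ 1` the signs match:
`(-1)^|C| = (-1)^(t-1) · (-1)^(|[t] \ C| + 1)`.
-/

open Finset

section

variable {ι R : Type*} [DecidableEq ι]

theorem forall_inter_nonempty_iff_of_minimal {S Γ : Finset (Finset ι)}
    (hΓ : ∀ G, G ∈ Γ ↔ G ∈ S ∧ ∀ G' ∈ S, G' ⊆ G → G' = G) (B : Finset ι) :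
    (∀ G ∈ Γ, (B ∩ G).Nonempty) ↔ ∀ G ∈ S, (B ∩ G).Nonempty := by
  refine ⟨fun h G hG => ?_, fun h G hG => h G ((hΓ G).1 hG).1⟩
  obtain ⟨G₀, hG₀G, hG₀⟩ := exists_minimal_le_of_wellFoundedLT (· ∈ S) G hG
  have hG₀Γ : G₀ ∈ Γ := (hΓ G₀).2 ⟨hG₀.prop, fun _ hG' hsub => hG₀.eq_of_le hG' hsub⟩
  exact (h G₀ hG₀Γ).mono (inter_subset_inter_left hG₀G)

variable [Fintype ι] [Nonempty ι] [Ring R]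

theorem neg_one_pow_card_eq_mul_neg_one_pow_card_compl (C : Finset ι) :
    (-1 : R) ^ #C = (-1) ^ (Fintype.card ι - 1) * (-1) ^ (#(univ \ C) + 1) := by
  have hC : #C ≤ Fintype.card ι := card_le_univ C
  have hι : 0 < Fintype.card ι := Fintype.card_pos
  rw [card_univ_sdiff, ← pow_add,
    show Fintype.card ι - 1 + (Fintype.card ι - #C + 1) = #C + 2 * (Fintype.card ι - #C) by omega,
    pow_add, pow_mul, neg_one_sq, one_pow, mul_one]

theorem sum_filter_neg_one_pow_card_eq_compl (P : Finset ι → Prop) [DecidablePred P] :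
    ∑ C ∈ univ.powerset.filter P, (-1 : R) ^ #C =
      (-1 : R) ^ (Fintype.card ι - 1) *
        ∑ F ∈ univ.powerset.filter (fun F => P (univ \ F)), (-1 : R) ^ (#F + 1) := by
  rw [mul_sum]
  refine sum_nbij' (univ \ ·) (univ \ ·) ?_ ?_ ?_ ?_ ?_ <;>
    simp only [powerset_univ, mem_filter, mem_univ, true_and, sdiff_sdiff_right_self, subset_univ,
      inf_of_le_right, imp_self, implies_true]
  exact fun C _ => neg_one_pow_card_eq_mul_neg_one_pow_card_compl C

end

/-- the inner inclusion–exclusion sum `Σ_{C ⊆ Λ : D ⊆ I(C)} (-1)^{|C|}`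
equals `(-1)^{t-1}` times the reduced Euler characteristic of the complex `Δ*`
whose faces are the complements of the blocking sets of `Γ`. -/
theorem stmt9 {α : Type*} [DecidableEq α] (t : ℕ) (lam : Fin t → Finset α)
    (D : Finset (Finset α)) (hDne : D.Nonempty)
    (hD : ∀ d ∈ D, ∃ i : Fin t, d ⊆ lam i)
    (N : Finset α → Finset (Fin t))
    (hN : ∀ d, N d = (univ : Finset (Fin t)).filter (fun i => d ⊆ lam i))
    (Γ : Finset (Finset (Fin t)))
    (hΓ : Γ = (D.image N).filter (fun G => ∀ G' ∈ D.image N, G' ⊆ G → G' = G))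
    (Δstar : Finset (Finset (Fin t)))
    (hΔstar : Δstar = (univ : Finset (Fin t)).powerset.filter
      (fun F => ∀ G ∈ Γ, (((univ : Finset (Fin t)) \ F) ∩ G).Nonempty)) :
    (∑ C ∈ (univ : Finset (Fin t)).powerset.filter
        (fun C => ∀ d ∈ D, ∃ i ∈ C, d ⊆ lam i), (-1 : ℤ) ^ C.card) =
      (-1 : ℤ) ^ (t - 1) * ∑ F ∈ Δstar, (-1 : ℤ) ^ (F.card + 1) := by
  obtain ⟨d₀, hd₀⟩ := hDne
  obtain ⟨i₀, -⟩ := hD d₀ hd₀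
  have : Nonempty (Fin t) := ⟨i₀⟩
  have hcovers_iff_blocks : ∀ C : Finset (Fin t),
      (∀ d ∈ D, ∃ i ∈ C, d ⊆ lam i) ↔ ∀ G ∈ Γ, (C ∩ G).Nonempty := by
    intro C
    rw [forall_inter_nonempty_iff_of_minimal (S := D.image N) (Γ := Γ)
      (fun G => by rw [hΓ, mem_filter]), forall_mem_image]
    simp [hN, Finset.Nonempty]
  simp_rw [hΔstar, hcovers_iff_blocks]
  simpa only [Fintype.card_fin] using
    sum_filter_neg_one_pow_card_eq_compl (R := ℤ) (fun C => ∀ G ∈ Γ, (C ∩ G).Nonempty)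
end
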